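/- arXiv:1602.00355 — 3 statements merged into one kernel-verified Lean document; each statement's English description precedes it below -/
import Mathlib

section
/- Let P be a probability measure on a measurable space X and let k : X × X → ℝ be a symmetric, measurable kernel with 0 < m ≤ k(x,y) ≤ M for all x,y ∈ X. Define p(x) = ∫_X k(x,y) dP(y), the Markov transition kernel Ω(x, B) = ∫_B k(x,y)/p(x) dP(y), and the probability measure S(B) = ∫_B p(x) dP(x) / ∫_X p(x) dP(x). Then S is a stationary distribution for Ω: for every measurable set B, ∫_X Ω(x, B) dS(x) = S(B). -/
open MeasureTheory

/-- The smoothed distribution `S(B) = ∫_B p dP / ∫ p dP` is stationary for the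
Markov transition kernel `Ω(x, B) = ∫_B k(x,y)/p(x) dP(y)` of the diffusion:
`∫ Ω(x, B) dS(x) = S(B)` for every measurable `B`. -/
theorem diffusion_stationary_distribution
    {X : Type*} [MeasurableSpace X]
    (P : Measure X) [IsProbabilityMeasure P]
    (k : X → X → ℝ) (hk : Measurable (Function.uncurry k))
    (hsymm : ∀ x y, k x y = k y x)
    (m M : ℝ) (hm : 0 < m)
    (hbound : ∀ x y, m ≤ k x y ∧ k x y ≤ M)
    (p : X → ℝ) (hp : ∀ x, p x = ∫ y, k x y ∂P)
    (c : ℝ) (hc : c = ∫ x, p x ∂P)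
    (B : Set X) (hB : MeasurableSet B) :
    ∫ x, (∫ y in B, k x y / p x ∂P) * (p x / c) ∂P
      = (∫ y in B, p y ∂P) / c := by
  have hmeas1 : ∀ x, Measurable (fun y => k x y) := fun x => hk.of_uncurry_left
  have hint : ∀ x, Integrable (fun y => k x y) P := by
    intro x
    refine Integrable.mono' (integrable_const M) (hmeas1 x).aestronglyMeasurable ?_
    filter_upwards with y
    rw [Real.norm_eq_abs, abs_of_pos (lt_of_lt_of_le hm (hbound x y).1)]
    exact (hbound x y).2
  have hintB : ∀ x, Integrable (fun y => k x y) (P.restrict B) :=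
    fun x => (hint x).restrict
  have hppos : ∀ x, 0 < p x := by
    intro x
    rw [hp x]
    calc (0:ℝ) < m := hm
    _ = ∫ _, m ∂P := by simp
    _ ≤ ∫ y, k x y ∂P :=
      integral_mono (integrable_const m) (hint x) (fun y => (hbound x y).1)
  have hstep : ∀ x, (∫ y in B, k x y / p x ∂P) * (p x / c)
      = (∫ y in B, k x y ∂P) / c := by
    intro x
    rw [integral_div, div_mul_div_comm, mul_comm (p x) c,
      mul_div_mul_right _ _ (hppos x).ne']
  rw [integral_congr_ae (Filter.Eventually.of_forall hstep), integral_div]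
  congr 1
  have hswap : ∫ x, ∫ y in B, k x y ∂P ∂P = ∫ y in B, ∫ x, k x y ∂P ∂P := by
    rw [integral_integral_swap]
    refine Integrable.mono' (integrable_const M) ?_ ?_
    · exact hk.aestronglyMeasurable
    · filter_upwards with z
      obtain ⟨a, b⟩ := z
      simp only [Function.uncurry_apply_pair]
      rw [Real.norm_eq_abs, abs_of_pos (lt_of_lt_of_le hm (hbound a b).1)]
      exact (hbound a b).2
  rw [hswap]
  refine setIntegral_congr_fun hB fun y _ => ?_
  rw [hp y]
  exact integral_congr_ae (Filter.Eventually.of_forall fun x => hsymm x y)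
end

section
/- Let P be a probability measure on a measurable space X, let k : X × X → ℝ be a symmetric, measurable kernel with 0 < m ≤ k(x,y) ≤ M, let p(x) = ∫_X k(x,y) dP(y), let a(x,y) = k(x,y)/p(x), let (A f)(x) = ∫_X a(x,y) f(y) dP(y), and let S(B) = ∫_B p dP / ∫_X p dP. Then A is self-adjoint with respect to the weighted inner product ⟨f,g⟩_S = ∫_X f g dS: for all f, g ∈ L²(S), ⟨A f, g⟩_S = ⟨f, A g⟩_S. Consequently, if ψ and φ are eigenfunctions of A in L²(S) with distinct eigenvalues, then ⟨ψ, φ⟩_S = 0. -/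
/-!
Multiplying by the density turns `A` into the integral operator of the symmetric kernel
`k`: `(A f) p = ∫ k(·, y) f(y) dP(y)`. Hence `⟨A f, g⟩_S = c⁻¹ ∬ g(x) k(x, y) f(y) dP dP`,
which is symmetric in `f` and `g` by Fubini (the integrand is integrable since `k` is bounded
and `f, g ∈ L² ⊆ L¹`). Orthogonality of eigenfunctions then follows from
`λ ⟨ψ, φ⟩_S = ⟨A ψ, φ⟩_S = ⟨ψ, A φ⟩_S = μ ⟨ψ, φ⟩_S`.
-/

open MeasureTheory

section

variable {X : Type*} [MeasurableSpace X] {μ : Measure X}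

theorem integral_mul_integral_kernel_comm [SFinite μ] {k : X → X → ℝ} {C : ℝ}
    (hk : AEStronglyMeasurable (Function.uncurry k) (μ.prod μ))
    (hbdd : ∀ x y, ‖k x y‖ ≤ C) (hsymm : ∀ x y, k x y = k y x)
    {f g : X → ℝ} (hf : Integrable f μ) (hg : Integrable g μ) :
    ∫ x, g x * ∫ y, k x y * f y ∂μ ∂μ = ∫ x, f x * ∫ y, k x y * g y ∂μ ∂μ := by
  have hint : Integrable (Function.uncurry fun x y => k x y * (g x * f y)) (μ.prod μ) :=
    (hg.mul_prod hf).bdd_mul hk (.of_forall fun z => hbdd z.1 z.2)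
  calc ∫ x, g x * ∫ y, k x y * f y ∂μ ∂μ
      = ∫ x, ∫ y, k x y * (g x * f y) ∂μ ∂μ := by
        simp_rw [← integral_const_mul, mul_left_comm]
    _ = ∫ y, ∫ x, k x y * (g x * f y) ∂μ ∂μ := integral_integral_swap hint
    _ = ∫ y, f y * ∫ x, k y x * g x ∂μ ∂μ := by
        simp_rw [← integral_const_mul, hsymm _ _]
        congr with y; congr with x; ring

theorem integral_pos_of_pos_lower_bound [IsProbabilityMeasure μ] {h : X → ℝ} {m : ℝ}
    (hm : 0 < m) (hmh : ∀ x, m ≤ h x) (hint : Integrable h μ) : 0 < ∫ x, h x ∂μ :=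
  hm.trans_le <| by simpa using integral_mono (integrable_const m) hint hmh

theorem integral_mul_weight_eq_zero_of_eigen {A : (X → ℝ) → X → ℝ} {w ψ φ : X → ℝ}
    {lam mu : ℝ} (hsymm : ∫ x, A ψ x * φ x * w x ∂μ = ∫ x, ψ x * A φ x * w x ∂μ)
    (hψ : A ψ =ᵐ[μ] fun x => lam * ψ x) (hφ : A φ =ᵐ[μ] fun x => mu * φ x)
    (hne : lam ≠ mu) :
    ∫ x, ψ x * φ x * w x ∂μ = 0 := by
  have hψ' : ∫ x, A ψ x * φ x * w x ∂μ = lam * ∫ x, ψ x * φ x * w x ∂μ := by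
    rw [← integral_const_mul]
    refine integral_congr_ae ?_
    filter_upwards [hψ] with x hx
    rw [hx]; ring
  have hφ' : ∫ x, ψ x * A φ x * w x ∂μ = mu * ∫ x, ψ x * φ x * w x ∂μ := by
    rw [← integral_const_mul]
    refine integral_congr_ae ?_
    filter_upwards [hφ] with x hx
    rw [hx]; ring
  have : (lam - mu) * ∫ x, ψ x * φ x * w x ∂μ = 0 := by
    rw [sub_mul, ← hψ', ← hφ', hsymm, sub_self]
  exact (mul_eq_zero.mp this).resolve_left (sub_ne_zero.mpr hne)

end

theorem diffusion_operator_selfadjoint_general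
    {X : Type*} [MeasurableSpace X]
    (P : Measure X) [IsProbabilityMeasure P]
    (k : X → X → ℝ) (hk : Measurable (Function.uncurry k))
    (hsymm : ∀ x y, k x y = k y x)
    (m M : ℝ) (hm : 0 < m)
    (hbound : ∀ x y, m ≤ k x y ∧ k x y ≤ M)
    (p : X → ℝ) (hp : ∀ x, p x = ∫ y, k x y ∂P)
    (A : (X → ℝ) → (X → ℝ))
    (hA : ∀ f x, A f x = ∫ y, (k x y / p x) * f y ∂P)
    (c : ℝ) :
    (∀ f g : X → ℝ, MemLp f 2 P → MemLp g 2 P →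
      ∫ x, A f x * g x * (p x / c) ∂P = ∫ x, f x * A g x * (p x / c) ∂P) ∧
    (∀ (lam mu : ℝ) (ψ φ : X → ℝ), MemLp ψ 2 P → MemLp φ 2 P →
      (A ψ =ᵐ[P] fun x => lam * ψ x) → (A φ =ᵐ[P] fun x => mu * φ x) →
      lam ≠ mu → ∫ x, ψ x * φ x * (p x / c) ∂P = 0) := by
  have hkbdd : ∀ x y, ‖k x y‖ ≤ M := fun x y =>
    abs_le.mpr ⟨by linarith [hbound x y], (hbound x y).2⟩
  have hppos : ∀ x, 0 < p x := fun x => hp x ▸ integral_pos_of_pos_lower_bound hm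
    (hbound x · |>.1)
    (.of_bound hk.of_uncurry_left.aestronglyMeasurable M (.of_forall (hkbdd x)))
  have hAp : ∀ f x, A f x * p x = ∫ y, k x y * f y ∂P := fun f x => by
    rw [hA, ← integral_mul_const]
    refine integral_congr_ae (.of_forall fun y => ?_)
    field_simp [(hppos x).ne']
  have hweighted : ∀ f g : X → ℝ,
      ∫ x, A f x * g x * (p x / c) ∂P = c⁻¹ * ∫ x, g x * ∫ y, k x y * f y ∂P ∂P :=
      fun f g => by
    simp_rw [← hAp, ← integral_const_mul]
    congr with x; ring
  have hselfadj : ∀ f g : X → ℝ, MemLp f 2 P → MemLp g 2 P →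
      ∫ x, A f x * g x * (p x / c) ∂P = ∫ x, f x * A g x * (p x / c) ∂P := by
    intro f g hf hg
    rw [hweighted, integral_mul_integral_kernel_comm hk.aestronglyMeasurable hkbdd hsymm
      (hf.integrable one_le_two) (hg.integrable one_le_two), ← hweighted]
    simp_rw [mul_comm (A g _)]
  exact ⟨hselfadj, fun lam mu ψ φ hψ hφ =>
    integral_mul_weight_eq_zero_of_eigen (hselfadj ψ φ hψ hφ)⟩

/-- The diffusion operator `A f (x) = ∫ (k(x,y)/p(x)) f(y) dP(y)` is
self-adjoint with respect to the weighted inner product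
`⟨f, g⟩_S = ∫ f g (p/c) dP`, and eigenfunctions with distinct eigenvalues are
orthogonal in this inner product. -/
theorem diffusion_operator_selfadjoint
    {X : Type*} [MeasurableSpace X]
    (P : Measure X) [IsProbabilityMeasure P]
    (k : X → X → ℝ) (hk : Measurable (Function.uncurry k))
    (hsymm : ∀ x y, k x y = k y x)
    (m M : ℝ) (hm : 0 < m)
    (hbound : ∀ x y, m ≤ k x y ∧ k x y ≤ M)
    (p : X → ℝ) (hp : ∀ x, p x = ∫ y, k x y ∂P)
    (A : (X → ℝ) → (X → ℝ))
    (hA : ∀ f x, A f x = ∫ y, (k x y / p x) * f y ∂P)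
    (c : ℝ) (hc : c = ∫ x, p x ∂P) :
    (∀ f g : X → ℝ, MemLp f 2 P → MemLp g 2 P →
      ∫ x, A f x * g x * (p x / c) ∂P = ∫ x, f x * A g x * (p x / c) ∂P) ∧
    (∀ (lam mu : ℝ) (ψ φ : X → ℝ), MemLp ψ 2 P → MemLp φ 2 P →
      (A ψ =ᵐ[P] fun x => lam * ψ x) → (A φ =ᵐ[P] fun x => mu * φ x) →
      lam ≠ mu → ∫ x, ψ x * φ x * (p x / c) ∂P = 0) :=
  diffusion_operator_selfadjoint_general P k hk hsymm m M hm hbound p hp A hA c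
end

section
/- Let p : ℝ^d → [0,∞) be a bounded continuous probability density with ∫ p² dx > 0, and let P be the probability measure with density p with respect to Lebesgue measure. For ε > 0 define the Gaussian kernel k_ε(x,y) = exp(−‖x−y‖²/(4ε)), the smoothed density p_ε(x) = ∫ k_ε(x,y) p(y) dy, and the probability measure S_ε(B) = ∫_B p_ε(x) p(x) dx / ∫_{ℝ^d} p_ε(x) p(x) dx. Then for every Borel set B ⊆ ℝ^d, lim_{ε→0⁺} S_ε(B) = ∫_B p(x)² dx / ∫_{ℝ^d} p(x)² dx, i.e., the stationary distributions S_ε converge setwise to the measure S(B) = ∫_B p dP / ∫ p dP. -/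
/-!
The substitution `y = x - √(4ε) • u` writes `p_ε(x)` as
`(4ε)^(d/2) ∫ exp(-‖u‖²) p(x - √(4ε) • u) du`. The Jacobian factor `(4ε)^(d/2)` cancels in
the ratio defining `S_ε(B)`, and the remaining mollified density is bounded by
`C ∫ exp(-‖u‖²)` and tends pointwise to `p(x) ∫ exp(-‖u‖²)` as `ε → 0`, by continuity of `p`.
Dominated convergence against the integrable weight `p` then gives the limits of numerator and
denominator; the Gaussian mass `π^(d/2)` cancels as well.
-/

open MeasureTheory Filter Topology Module

section Mollification

variable {E : Type*} [NormedAddCommGroup E] [NormedSpace ℝ E] [MeasurableSpace E]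
  {μ : Measure E} {G p : E → ℝ} {C : ℝ}

theorem norm_integral_mul_comp_sub_smul_le (hG : Integrable G μ) (hC : ∀ x, ‖p x‖ ≤ C)
    (t : ℝ) (x : E) :
    ‖∫ u, G u * p (x - t • u) ∂μ‖ ≤ (∫ u, ‖G u‖ ∂μ) * C := by
  rw [← integral_mul_const]
  refine norm_integral_le_of_norm_le (hG.norm.mul_const C) (ae_of_all _ fun u => ?_)
  rw [norm_mul]
  exact mul_le_mul_of_nonneg_left (hC _) (norm_nonneg _)

variable [BorelSpace E]

theorem continuous_integral_mul_comp_sub_smul (hG : Integrable G μ) (hp : Continuous p)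
    (hC : ∀ x, ‖p x‖ ≤ C) :
    Continuous fun q : ℝ × E => ∫ u, G u * p (q.2 - q.1 • u) ∂μ := by
  refine continuous_of_dominated (bound := fun u => ‖G u‖ * C) (fun q => ?_)
    (fun q => ae_of_all _ fun u => ?_) (hG.norm.mul_const C) (ae_of_all _ fun u => by fun_prop)
  · exact hG.aestronglyMeasurable.mul (by fun_prop : Continuous _).aestronglyMeasurable
  · rw [norm_mul]
    exact mul_le_mul_of_nonneg_left (hC _) (norm_nonneg _)

theorem tendsto_integral_integral_mul_comp_sub_smul_mul {ν : Measure E} {q : E → ℝ}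
    (hG : Integrable G μ) (hp : Continuous p) (hC : ∀ x, ‖p x‖ ≤ C) (hq : Integrable q ν) :
    Tendsto (fun t : ℝ => ∫ x, (∫ u, G u * p (x - t • u) ∂μ) * q x ∂ν) (𝓝 0)
      (𝓝 ((∫ u, G u ∂μ) * ∫ x, p x * q x ∂ν)) := by
  have hcont := continuous_integral_mul_comp_sub_smul hG hp hC
  have hlim : ∀ x, Tendsto (fun t : ℝ => ∫ u, G u * p (x - t • u) ∂μ) (𝓝 0)
      (𝓝 ((∫ u, G u ∂μ) * p x)) := fun x => by
    simpa [Function.comp_def, integral_mul_const] using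
      (hcont.comp (Continuous.prodMk_left x)).tendsto 0
  rw [← integral_const_mul]
  refine tendsto_integral_filter_of_dominated_convergence (fun x => (∫ u, ‖G u‖ ∂μ) * C * ‖q x‖)
    (Eventually.of_forall fun t => ?_) (Eventually.of_forall fun t => ae_of_all _ fun x => ?_)
    (hq.norm.const_mul _)
    (ae_of_all _ fun x => by simpa only [mul_assoc] using (hlim x).mul_const (q x))
  · exact ((hcont.comp (Continuous.prodMk_right t)).aestronglyMeasurable).mul
      hq.aestronglyMeasurable
  · rw [norm_mul]
    exact mul_le_mul_of_nonneg_right (norm_integral_mul_comp_sub_smul_le hG hC t x)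
      (norm_nonneg _)

end Mollification

section ChangeOfVariables

variable {E : Type*} [NormedAddCommGroup E] [NormedSpace ℝ E] [FiniteDimensional ℝ E]
  [MeasurableSpace E] [BorelSpace E] (μ : Measure E) [μ.IsAddHaarMeasure]

theorem integral_comp_inv_smul_sub_mul (G p : E → ℝ) {s : ℝ} (hs : 0 < s) (x : E) :
    ∫ y, G (s⁻¹ • (x - y)) * p y ∂μ = s ^ finrank ℝ E * ∫ u, G u * p (x - s • u) ∂μ := by
  calc ∫ y, G (s⁻¹ • (x - y)) * p y ∂μ = ∫ z, G (s⁻¹ • z) * p (x - z) ∂μ := by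
        rw [← integral_sub_left_eq_self _ μ x]
        simp only [sub_sub_cancel]
    _ = s ^ finrank ℝ E * ∫ u, G u * p (x - s • u) ∂μ := by
        rw [← smul_eq_mul, ← Measure.integral_comp_inv_smul_of_nonneg μ _ hs.le]
        simp only [smul_inv_smul₀ hs.ne']

end ChangeOfVariables

section Gaussian

variable {V : Type*} [NormedAddCommGroup V] [InnerProductSpace ℝ V] [FiniteDimensional ℝ V]
  [MeasurableSpace V] [BorelSpace V]

theorem integral_exp_neg_sq_norm :
    ∫ v : V, Real.exp (-‖v‖ ^ 2) = Real.pi ^ (finrank ℝ V / 2 : ℝ) := by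
  simpa using GaussianFourier.integral_rexp_neg_mul_sq_norm (V := V) one_pos

theorem integrable_exp_neg_sq_norm : Integrable fun v : V => Real.exp (-‖v‖ ^ 2) :=
  Integrable.of_integral_ne_zero (by rw [integral_exp_neg_sq_norm]; positivity)

theorem integral_exp_neg_sq_norm_sub_div_mul (p : V → ℝ) {ε : ℝ} (hε : 0 < ε) (x : V) :
    ∫ y, Real.exp (-(‖x - y‖ ^ 2) / (4 * ε)) * p y =
      √(4 * ε) ^ finrank ℝ V * ∫ u, Real.exp (-‖u‖ ^ 2) * p (x - √(4 * ε) • u) := by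
  have hs : 0 < √(4 * ε) := by positivity
  rw [← integral_comp_inv_smul_sub_mul volume (fun u => Real.exp (-‖u‖ ^ 2)) p hs x]
  congr with y
  rw [norm_smul, mul_pow, norm_inv, Real.norm_of_nonneg hs.le, inv_pow,
    Real.sq_sqrt (by positivity), neg_div, inv_mul_eq_div]

end Gaussian

theorem gaussian_stationary_distribution_limit_general
    (d : ℕ) (p : EuclideanSpace ℝ (Fin d) → ℝ)
    (hp_cont : Continuous p) (hp_nonneg : ∀ x, 0 ≤ p x)
    (hp_bdd : ∃ C : ℝ, ∀ x, p x ≤ C)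
    (hp_int : Integrable p volume)
    (hp2 : 0 < ∫ x, (p x) ^ 2)
    (B : Set (EuclideanSpace ℝ (Fin d))) :
    Tendsto (fun ε : ℝ =>
        (∫ x in B, (∫ y, Real.exp (-(‖x - y‖ ^ 2) / (4 * ε)) * p y) * p x) /
        (∫ x, (∫ y, Real.exp (-(‖x - y‖ ^ 2) / (4 * ε)) * p y) * p x))
      (nhdsWithin 0 (Set.Ioi 0))
      (nhds ((∫ x in B, (p x) ^ 2) / ∫ x, (p x) ^ 2)) := by
  obtain ⟨C, hC⟩ := hp_bdd
  have hp_norm : ∀ x, ‖p x‖ ≤ C := fun x => (Real.norm_of_nonneg (hp_nonneg x)).trans_le (hC x)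
  set K := ∫ u : EuclideanSpace ℝ (Fin d), Real.exp (-‖u‖ ^ 2)
  have hK : 0 < K := by simp only [K, integral_exp_neg_sq_norm]; positivity
  have hscale : Tendsto (fun ε : ℝ => √(4 * ε)) (𝓝[>] 0) (𝓝 0) :=
    ((continuous_const.mul continuous_id).sqrt.tendsto' 0 0 (by simp)).mono_left
      nhdsWithin_le_nhds
  have hlim : ∀ A, Tendsto
      (fun ε : ℝ => ∫ x in A, (∫ u, Real.exp (-‖u‖ ^ 2) * p (x - √(4 * ε) • u)) * p x)
      (𝓝[>] 0) (𝓝 (K * ∫ x in A, p x ^ 2)) := fun A => by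
    simpa only [Function.comp_def, ← sq] using (tendsto_integral_integral_mul_comp_sub_smul_mul
      integrable_exp_neg_sq_norm hp_cont hp_norm hp_int.restrict).comp hscale
  have hrescale : ∀ᶠ ε in 𝓝[>] (0 : ℝ),
      (∫ x in B, (∫ u, Real.exp (-‖u‖ ^ 2) * p (x - √(4 * ε) • u)) * p x) /
        (∫ x, (∫ u, Real.exp (-‖u‖ ^ 2) * p (x - √(4 * ε) • u)) * p x) =
      (∫ x in B, (∫ y, Real.exp (-(‖x - y‖ ^ 2) / (4 * ε)) * p y) * p x) /
        (∫ x, (∫ y, Real.exp (-(‖x - y‖ ^ 2) / (4 * ε)) * p y) * p x) := by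
    filter_upwards [self_mem_nhdsWithin] with ε (hε : 0 < ε)
    simp_rw [integral_exp_neg_sq_norm_sub_div_mul p hε, mul_assoc, integral_const_mul]
    exact (mul_div_mul_left _ _ (by positivity)).symm
  rw [← mul_div_mul_left _ _ hK.ne']
  exact ((hlim B).div (by simpa using hlim Set.univ) (by positivity)).congr' hrescale

/-- Setwise convergence of the stationary distributions of the Gaussian
diffusion: for a bounded continuous density `p` on `ℝ^d`, with
`p_ε(x) = ∫ exp(-‖x-y‖²/(4ε)) p(y) dy` and
`S_ε(B) = ∫_B p_ε p / ∫ p_ε p`, one has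
`S_ε(B) → ∫_B p² / ∫ p²` as `ε → 0⁺`, for every Borel set `B`. -/
theorem gaussian_stationary_distribution_limit
    (d : ℕ) (p : EuclideanSpace ℝ (Fin d) → ℝ)
    (hp_cont : Continuous p) (hp_nonneg : ∀ x, 0 ≤ p x)
    (hp_bdd : ∃ C : ℝ, ∀ x, p x ≤ C)
    (hp_int : Integrable p volume)
    (hp_dens : ∫ x, p x = 1)
    (hp2 : 0 < ∫ x, (p x) ^ 2)
    (B : Set (EuclideanSpace ℝ (Fin d))) (hB : MeasurableSet B) :
    Tendsto (fun ε : ℝ =>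
        (∫ x in B, (∫ y, Real.exp (-(‖x - y‖ ^ 2) / (4 * ε)) * p y) * p x) /
        (∫ x, (∫ y, Real.exp (-(‖x - y‖ ^ 2) / (4 * ε)) * p y) * p x))
      (nhdsWithin 0 (Set.Ioi 0))
      (nhds ((∫ x in B, (p x) ^ 2) / ∫ x, (p x) ^ 2)) :=
  gaussian_stationary_distribution_limit_general d p hp_cont hp_nonneg hp_bdd hp_int hp2 B
end
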